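/- arXiv:2203.05111 — 2 statements merged into one kernel-verified Lean document; each statement's English description precedes it below -/
import Mathlib

section
/- If Y and Z are random variables taking values in [0,1], then |E[Y²Z] − E[Y]²E[Z]| ≤ 2(Var[Y] + Var[Z]). -/
/-!
Write `a = 𝔼[Y]`, `b = 𝔼[Z]`. Then `𝔼[Y²Z] - a²b = cov(Y², Z) + b Var[Y]`, and the covariance
may be computed as `𝔼[(Y² - a²)(Z - b)]`. On `[0, 1]` the square is `2`-Lipschitz, so
`|(Y² - a²)(Z - b)| ≤ 2|Y - a||Z - b| ≤ (Y - a)² + (Z - b)²`, whence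
`|cov(Y², Z)| ≤ Var[Y] + Var[Z]`, while `0 ≤ b Var[Y] ≤ Var[Y]`.
-/

open MeasureTheory ProbabilityTheory

namespace ProbabilityTheory

variable {Ω : Type*} {mΩ : MeasurableSpace Ω} {μ : Measure Ω} [IsProbabilityMeasure μ]
  {X Y Z : Ω → ℝ}

lemma covariance_eq_integral_sub_const_mul (hX : MemLp X 2 μ) (hZ : MemLp Z 2 μ) (c : ℝ) :
    cov[X, Z; μ] = ∫ ω, (X ω - c) * (Z ω - μ[Z]) ∂μ := by
  have hZc : Integrable (fun ω ↦ Z ω - μ[Z]) μ := (hZ.integrable one_le_two).sub (integrable_const _)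
  have hsplit : (fun ω ↦ (X ω - c) * (Z ω - μ[Z]))
      = fun ω ↦ (X ω - μ[X]) * (Z ω - μ[Z]) + (μ[X] - c) * (Z ω - μ[Z]) := by
    funext ω; ring
  have hXZ : Integrable (fun ω ↦ (X ω - μ[X]) * (Z ω - μ[Z])) μ :=
    (hX.sub (memLp_const _)).integrable_mul (hZ.sub (memLp_const _))
  rw [hsplit, integral_add hXZ (hZc.const_mul _), integral_const_mul,
    integral_sub (hZ.integrable one_le_two) (integrable_const _)]
  simp [covariance]

lemma two_mul_abs_covariance_le {L c : ℝ} (hL : 0 ≤ L) (hX : MemLp X 2 μ) (hY : MemLp Y 2 μ)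
    (hZ : MemLp Z 2 μ) (hXY : ∀ᵐ ω ∂μ, |X ω - c| ≤ L * |Y ω - μ[Y]|) :
    2 * |cov[X, Z; μ]| ≤ L * (Var[Y; μ] + Var[Z; μ]) := by
  have hYc : Integrable (fun ω ↦ (Y ω - μ[Y]) ^ 2) μ := (hY.sub (memLp_const _)).integrable_sq
  have hZc : Integrable (fun ω ↦ (Z ω - μ[Z]) ^ 2) μ := (hZ.sub (memLp_const _)).integrable_sq
  have hpt : ∀ᵐ ω ∂μ, ‖(X ω - c) * (Z ω - μ[Z])‖
      ≤ L / 2 * ((Y ω - μ[Y]) ^ 2 + (Z ω - μ[Z]) ^ 2) := by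
    filter_upwards [hXY] with ω hω
    rw [Real.norm_eq_abs, abs_mul]
    calc |X ω - c| * |Z ω - μ[Z]| ≤ L * |Y ω - μ[Y]| * |Z ω - μ[Z]| := by gcongr
      _ = L / 2 * (2 * |Y ω - μ[Y]| * |Z ω - μ[Z]|) := by ring
      _ ≤ L / 2 * (|Y ω - μ[Y]| ^ 2 + |Z ω - μ[Z]| ^ 2) := by
        gcongr; exact two_mul_le_add_sq _ _
      _ = L / 2 * ((Y ω - μ[Y]) ^ 2 + (Z ω - μ[Z]) ^ 2) := by rw [sq_abs, sq_abs]
  have hsum : Integrable (fun ω ↦ L / 2 * ((Y ω - μ[Y]) ^ 2 + (Z ω - μ[Z]) ^ 2)) μ :=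
    (hYc.add hZc).const_mul _
  have := norm_integral_le_of_norm_le hsum hpt
  rw [integral_const_mul, integral_add hYc hZc, ← variance_eq_integral hY.aemeasurable,
    ← variance_eq_integral hZ.aemeasurable, ← covariance_eq_integral_sub_const_mul hX hZ,
    Real.norm_eq_abs] at this
  linarith

lemma integral_sq_mul_sub_eq_covariance_add (hY : MemLp Y 2 μ)
    (hY2 : MemLp (fun ω ↦ Y ω ^ 2) 2 μ) (hZ : MemLp Z 2 μ) :
    ∫ ω, Y ω ^ 2 * Z ω ∂μ - μ[Y] ^ 2 * μ[Z] = cov[fun ω ↦ Y ω ^ 2, Z; μ] + μ[Z] * Var[Y; μ] := by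
  rw [covariance_eq_sub hY2 hZ, variance_eq_sub hY]
  simp only [Pi.mul_apply, Pi.pow_apply]
  ring

end ProbabilityTheory

lemma abs_sq_sub_sq_le_two_mul_abs_sub {x a : ℝ} (hx : |x| ≤ 1) (ha : |a| ≤ 1) :
    |x ^ 2 - a ^ 2| ≤ 2 * |x - a| := by
  rw [sq_sub_sq, abs_mul]
  gcongr
  exact (abs_add_le x a).trans (by linarith)

theorem abs_integral_sq_mul_sub_le_two_mul_var_add
    {Ω : Type*} [MeasureSpace Ω] (μ : Measure Ω) [IsProbabilityMeasure μ]
    (Y Z : Ω → ℝ) (hYm : AEMeasurable Y μ) (hZm : AEMeasurable Z μ)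
    (hY0 : ∀ᵐ ω ∂μ, 0 ≤ Y ω) (hY1 : ∀ᵐ ω ∂μ, Y ω ≤ 1)
    (hZ0 : ∀ᵐ ω ∂μ, 0 ≤ Z ω) (hZ1 : ∀ᵐ ω ∂μ, Z ω ≤ 1) :
    |(∫ ω, (Y ω) ^ 2 * Z ω ∂μ) - (∫ ω, Y ω ∂μ) ^ 2 * (∫ ω, Z ω ∂μ)| ≤
      2 * (variance Y μ + variance Z μ) := by
  have hY : ∀ᵐ ω ∂μ, Y ω ∈ Set.Icc (0 : ℝ) 1 := by filter_upwards [hY0, hY1] with ω using And.intro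
  have hZ : ∀ᵐ ω ∂μ, Z ω ∈ Set.Icc (0 : ℝ) 1 := by filter_upwards [hZ0, hZ1] with ω using And.intro
  have hY2 : ∀ᵐ ω ∂μ, Y ω ^ 2 ∈ Set.Icc (0 : ℝ) 1 := by
    filter_upwards [hY] with ω ⟨h0, h1⟩ using ⟨by positivity, pow_le_one₀ h0 h1⟩
  have hYL : MemLp Y 2 μ := memLp_of_bounded hY hYm.aestronglyMeasurable 2
  have hZL : MemLp Z 2 μ := memLp_of_bounded hZ hZm.aestronglyMeasurable 2
  have hY2L : MemLp (fun ω ↦ Y ω ^ 2) 2 μ :=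
    memLp_of_bounded hY2 (hYm.pow_const 2).aestronglyMeasurable 2
  have hEY := (convex_Icc (0 : ℝ) 1).integral_mem isClosed_Icc hY (hYL.integrable one_le_two)
  have hEZ := (convex_Icc (0 : ℝ) 1).integral_mem isClosed_Icc hZ (hZL.integrable one_le_two)
  have hcov : 2 * |cov[fun ω ↦ Y ω ^ 2, Z; μ]| ≤ 2 * (Var[Y; μ] + Var[Z; μ]) := by
    refine two_mul_abs_covariance_le (c := μ[Y] ^ 2) zero_le_two hY2L hYL hZL ?_
    filter_upwards [hY] with ω hω
    exact abs_sq_sub_sq_le_two_mul_abs_sub (abs_le.2 ⟨by linarith [hω.1], hω.2⟩)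
      (abs_le.2 ⟨by linarith [hEY.1], hEY.2⟩)
  have hvar : |μ[Z] * Var[Y; μ]| ≤ Var[Y; μ] := by
    rw [abs_of_nonneg (mul_nonneg hEZ.1 (variance_nonneg Y μ))]
    exact mul_le_of_le_one_left (variance_nonneg Y μ) hEZ.2
  rw [integral_sq_mul_sub_eq_covariance_add hYL hY2L hZL]
  calc _ ≤ |cov[fun ω ↦ Y ω ^ 2, Z; μ]| + |μ[Z] * Var[Y; μ]| := abs_add_le _ _
    _ ≤ _ := by linarith [variance_nonneg Z μ]
end

section
/- If Y and Z are nonnegative random variables satisfying Y + Z ≤ 1 almost surely, then Var[YZ] ≤ 8(Var[Y] + Var[Z]). -/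
/-!
Writing `YZ - 𝔼Y 𝔼Z = Y (Z - 𝔼Z) + 𝔼Z (Y - 𝔼Y)` and using `|Y|, |𝔼Z| ≤ 1` gives
`(YZ - 𝔼Y 𝔼Z)² ≤ 2 (Y - 𝔼Y)² + 2 (Z - 𝔼Z)²` pointwise. Since the variance is the least mean
square deviation from a constant, taking expectations yields `Var[YZ] ≤ 2 (Var[Y] + Var[Z])`.
-/

open MeasureTheory ProbabilityTheory

lemma sq_mul_sub_mul_le {y z a b : ℝ} (hy : |y| ≤ 1) (hb : |b| ≤ 1) :
    (y * z - a * b) ^ 2 ≤ 2 * (y - a) ^ 2 + 2 * (z - b) ^ 2 := by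
  have hy2 : y ^ 2 ≤ 1 := by simpa using sq_le_sq' (abs_le.1 hy).1 (abs_le.1 hy).2
  have hb2 : b ^ 2 ≤ 1 := by simpa using sq_le_sq' (abs_le.1 hb).1 (abs_le.1 hb).2
  calc (y * z - a * b) ^ 2 = (y * (z - b) + b * (y - a)) ^ 2 := by ring
    _ ≤ 2 * (y ^ 2 * (z - b) ^ 2) + 2 * (b ^ 2 * (y - a) ^ 2) := by
      nlinarith [sq_nonneg (y * (z - b) - b * (y - a))]
    _ ≤ 2 * (y - a) ^ 2 + 2 * (z - b) ^ 2 := by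
      nlinarith [mul_le_of_le_one_left (sq_nonneg (z - b)) hy2,
        mul_le_of_le_one_left (sq_nonneg (y - a)) hb2]

namespace ProbabilityTheory

variable {Ω : Type*} [MeasurableSpace Ω] {μ : Measure Ω} [IsProbabilityMeasure μ]

lemma variance_le_integral_sub_const_sq {X : Ω → ℝ} (hX : AEStronglyMeasurable X μ) (c : ℝ) :
    Var[X; μ] ≤ ∫ ω, (X ω - c) ^ 2 ∂μ := by
  rw [← variance_sub_const hX c]
  exact variance_le_expectation_sq (by fun_prop)

lemma variance_mul_le_two_mul_add {Y Z : Ω → ℝ} (hYm : AEMeasurable Y μ) (hZm : AEMeasurable Z μ)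
    (hY : ∀ᵐ ω ∂μ, |Y ω| ≤ 1) (hZ : ∀ᵐ ω ∂μ, |Z ω| ≤ 1) :
    Var[fun ω ↦ Y ω * Z ω; μ] ≤ 2 * (Var[Y; μ] + Var[Z; μ]) := by
  have hYℒ : MemLp Y 2 μ := .of_bound hYm.aestronglyMeasurable 1 hY
  have hZℒ : MemLp Z 2 μ := .of_bound hZm.aestronglyMeasurable 1 hZ
  have hiY : Integrable (fun ω ↦ (Y ω - μ[Y]) ^ 2) μ :=
    (hYℒ.sub (memLp_const μ[Y])).integrable_sq
  have hiZ : Integrable (fun ω ↦ (Z ω - μ[Z]) ^ 2) μ :=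
    (hZℒ.sub (memLp_const μ[Z])).integrable_sq
  have hmZ : |μ[Z]| ≤ 1 := by
    simpa using norm_integral_le_of_norm_le_const (μ := μ) (f := Z) (C := 1) hZ
  calc Var[fun ω ↦ Y ω * Z ω; μ] ≤ ∫ ω, (Y ω * Z ω - μ[Y] * μ[Z]) ^ 2 ∂μ :=
        variance_le_integral_sub_const_sq (hYm.mul hZm).aestronglyMeasurable _
    _ ≤ ∫ ω, (2 * (Y ω - μ[Y]) ^ 2 + 2 * (Z ω - μ[Z]) ^ 2) ∂μ :=
        integral_mono_of_nonneg (.of_forall fun _ ↦ sq_nonneg _)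
          ((hiY.const_mul 2).add (hiZ.const_mul 2)) (hY.mono fun _ hy ↦ sq_mul_sub_mul_le hy hmZ)
    _ = 2 * (Var[Y; μ] + Var[Z; μ]) := by
      rw [integral_add (hiY.const_mul 2) (hiZ.const_mul 2), integral_const_mul,
        integral_const_mul, variance_eq_integral hYm, variance_eq_integral hZm, mul_add]

end ProbabilityTheory

theorem variance_mul_le_eight_mul_var_add
    {Ω : Type*} [MeasureSpace Ω] (μ : Measure Ω) [IsProbabilityMeasure μ]
    (Y Z : Ω → ℝ) (hYm : AEMeasurable Y μ) (hZm : AEMeasurable Z μ)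
    (hY0 : ∀ᵐ ω ∂μ, 0 ≤ Y ω) (hZ0 : ∀ᵐ ω ∂μ, 0 ≤ Z ω)
    (hYZ : ∀ᵐ ω ∂μ, Y ω + Z ω ≤ 1) :
    variance (fun ω => Y ω * Z ω) μ ≤ 8 * (variance Y μ + variance Z μ) := by
  have hY : ∀ᵐ ω ∂μ, |Y ω| ≤ 1 := by
    filter_upwards [hY0, hZ0, hYZ] with ω hy hz hyz
    exact abs_le.2 ⟨by linarith, by linarith⟩
  have hZ : ∀ᵐ ω ∂μ, |Z ω| ≤ 1 := by
    filter_upwards [hY0, hZ0, hYZ] with ω hy hz hyz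
    exact abs_le.2 ⟨by linarith, by linarith⟩
  have := variance_mul_le_two_mul_add hYm hZm hY hZ
  linarith [variance_nonneg Y μ, variance_nonneg Z μ]
end
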